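/- arXiv:0808.3453 — 4 statements merged into one kernel-verified Lean document; each statement's English description precedes it below -/
import Mathlib

section
/- For 0 < ω < 1 and t ≥ 1 with t(R-1) < 0, the function x ↦ x(R - 1 + t·h(ω/x)) on [ω,1] attains its maximum at x₀ = ω/(1-z) where z is defined by t log₂ z = R-1, provided x₀ ≤ 1; and at this point the maximum value equals ω t log₂(z/(1-z)). -/
/-!
Writing `R - 1 = t log₂ z`, the function is `t · x (log₂ z + h(ω/x))`. Gibbs' inequality for the
distributions `(p, 1 - p)` and `(1 - z, z)` gives `h(p) ≤ -p log₂ (1 - z) - (1 - p) log₂ z`, and with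
`p = ω/x` this bounds `x (log₂ z + h(ω/x))` by `ω log₂ (z / (1 - z))`, independently of `x`.
Equality holds when `ω/x = 1 - z`, i.e. at `x₀ = ω/(1 - z)`.
-/

/-- The binary entropy function. -/
noncomputable def binEnt (x : ℝ) : ℝ := -x * Real.logb 2 x - (1 - x) * Real.logb 2 (1 - x)

open Real

lemma sub_le_mul_log_sub_mul_log {a b : ℝ} (ha : 0 ≤ a) (hb : 0 < b) :
    a - b ≤ a * log a - a * log b := by
  rcases ha.eq_or_lt with rfl | ha
  · simpa using hb.le
  · have h := mul_le_mul_of_nonneg_left (log_le_sub_one_of_pos (div_pos hb ha)) ha.le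
    rw [log_div hb.ne' ha.ne', mul_sub_one, mul_div_cancel₀ b ha.ne'] at h
    linarith

lemma binEnt_le_crossEntropy {p q : ℝ} (hp0 : 0 ≤ p) (hp1 : p ≤ 1) (hq0 : 0 < q) (hq1 : q < 1) :
    binEnt p ≤ -p * logb 2 q - (1 - p) * logb 2 (1 - q) := by
  have hp := sub_le_mul_log_sub_mul_log hp0 hq0
  have hp' := sub_le_mul_log_sub_mul_log (sub_nonneg.2 hp1) (sub_pos.2 hq1)
  have hgap : -p * logb 2 q - (1 - p) * logb 2 (1 - q) - binEnt p =
      (p * log p - p * log q + ((1 - p) * log (1 - p) - (1 - p) * log (1 - q))) / log 2 := by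
    simp only [binEnt, logb]
    ring
  have : 0 ≤ -p * logb 2 q - (1 - p) * logb 2 (1 - q) - binEnt p := by
    rw [hgap]
    exact div_nonneg (by linarith) (log_nonneg one_le_two)
  linarith

lemma mul_logb_add_binEnt_div_le {ω x z : ℝ} (hω : 0 < ω) (hωx : ω ≤ x) (hz0 : 0 < z)
    (hz1 : z < 1) :
    x * (logb 2 z + binEnt (ω / x)) ≤ ω * logb 2 (z / (1 - z)) := by
  have hx : 0 < x := hω.trans_le hωx
  have hgibbs := binEnt_le_crossEntropy (div_nonneg hω.le hx.le) ((div_le_one hx).2 hωx)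
    (sub_pos.2 hz1) (sub_lt_self 1 hz0)
  rw [sub_sub_cancel] at hgibbs
  calc x * (logb 2 z + binEnt (ω / x))
      ≤ x * (logb 2 z + (-(ω / x) * logb 2 (1 - z) - (1 - ω / x) * logb 2 z)) := by
        gcongr
    _ = ω * (logb 2 z - logb 2 (1 - z)) := by
        field_simp
        ring
    _ = ω * logb 2 (z / (1 - z)) := by
        rw [logb_div hz0.ne' (sub_pos.2 hz1).ne']

lemma mul_logb_add_binEnt_div_eq {ω z : ℝ} (hω : ω ≠ 0) (hz0 : 0 < z) (hz1 : z < 1) :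
    ω / (1 - z) * (logb 2 z + binEnt (ω / (ω / (1 - z)))) = ω * logb 2 (z / (1 - z)) := by
  have h1z : 1 - z ≠ 0 := (sub_pos.2 hz1).ne'
  rw [div_div_cancel₀ hω, binEnt, sub_sub_cancel, logb_div hz0.ne' h1z]
  field_simp
  ring

theorem stmt_3_general (t R ω z : ℝ) (ht : 1 ≤ t) (hR : t * (R - 1) < 0)
    (hω0 : 0 < ω)
    (hz0 : 0 < z) (hz : t * Real.logb 2 z = R - 1) :
    IsMaxOn (fun x => x * (R - 1 + t * binEnt (ω / x))) (Set.Icc ω 1) (ω / (1 - z)) ∧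
      (ω / (1 - z)) * (R - 1 + t * binEnt (ω / (ω / (1 - z)))) =
        ω * t * Real.logb 2 (z / (1 - z)) := by
  have ht0 : 0 ≤ t := zero_le_one.trans ht
  have hlogz : logb 2 z < 0 := neg_of_mul_neg_right (hz ▸ neg_of_mul_neg_right hR ht0) ht0
  have hz1 : z < 1 := (logb_neg_iff one_lt_two hz0).1 hlogz
  have hvalue := mul_logb_add_binEnt_div_eq hω0.ne' hz0 hz1
  rw [← hz]
  refine ⟨fun x hx => ?_, by linear_combination t * hvalue⟩
  calc x * (t * logb 2 z + t * binEnt (ω / x))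
      = t * (x * (logb 2 z + binEnt (ω / x))) := by ring
    _ ≤ t * (ω * logb 2 (z / (1 - z))) :=
        mul_le_mul_of_nonneg_left (mul_logb_add_binEnt_div_le hω0 hx.1 hz0 hz1) ht0
    _ = ω / (1 - z) * (t * logb 2 z + t * binEnt (ω / (ω / (1 - z)))) := by
        linear_combination -t * hvalue

theorem stmt_3 (t R ω z : ℝ) (ht : 1 ≤ t) (hR : t * (R - 1) < 0)
    (hω0 : 0 < ω) (hω1 : ω < 1)
    (hz0 : 0 < z) (hz : t * Real.logb 2 z = R - 1)
    (hx0 : ω / (1 - z) ≤ 1) :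
    IsMaxOn (fun x => x * (R - 1 + t * binEnt (ω / x))) (Set.Icc ω 1) (ω / (1 - z)) ∧
      (ω / (1 - z)) * (R - 1 + t * binEnt (ω / (ω / (1 - z)))) =
        ω * t * Real.logb 2 (z / (1 - z)) :=
  stmt_3_general t R ω z ht hR hω0 hz0 hz
end

section
/- Let n ≥ d ≥ 1 and 0 < ω < 1 with d < ωn < n. Then the equation ωn + Σ_{i=d}^{n} binom(n,i)(ωn - i)x^i = 0 has a unique positive real root x₀. -/
/-! Since `d ≥ 1`, the constant `ωn` is the `i = 0` term `binom(n,0)(ωn - 0)x⁰`, so the equation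
reads `∑ aᵢ xⁱ = 0` over `i ∈ {0} ∪ [d, n]` with `aᵢ = binom(n,i)(ωn - i)`. These coefficients
change sign exactly once, at `m = ⌊ωn⌋`: dividing by `xᵐ` turns every term into an antitone
function of `x > 0`, and the constant term into a strictly antitone one, so there is at most one
positive root. The left side is `ωn > 0` at `x = 0` and tends to `-∞` because its leading
coefficient `ωn - n` is negative, so a root exists by the intermediate value theorem. -/

open Filter Topology Finset

lemma sum_mul_pow_eq_rpow_mul_sum {s : Finset ℕ} (a : ℕ → ℝ) {x : ℝ} (hx : 0 < x) (m : ℕ) :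
    ∑ i ∈ s, a i * x ^ i = x ^ (m : ℝ) * ∑ i ∈ s, a i * x ^ ((i : ℝ) - m) := by
  rw [Finset.mul_sum]
  refine Finset.sum_congr rfl fun i _ => ?_
  rw [mul_left_comm, ← Real.rpow_add hx, add_sub_cancel, Real.rpow_natCast]

lemma strictAntiOn_sum_mul_rpow_sub {s : Finset ℕ} {a : ℕ → ℝ} {m : ℕ}
    (hpos : ∀ i ∈ s, i ≤ m → 0 ≤ a i) (hneg : ∀ i ∈ s, m < i → a i ≤ 0)
    {j : ℕ} (hj : j ∈ s) (hjm : j < m) (haj : 0 < a j) :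
    StrictAntiOn (fun x : ℝ => ∑ i ∈ s, a i * x ^ ((i : ℝ) - m)) (Set.Ioi 0) := by
  intro x hx y _ hxy
  refine Finset.sum_lt_sum (fun i hi => ?_) ⟨j, hj, ?_⟩
  · rcases le_or_gt i m with him | him
    · have he : (i : ℝ) - m ≤ 0 := by rw [sub_nonpos]; exact_mod_cast him
      exact mul_le_mul_of_nonneg_left (Real.rpow_le_rpow_of_nonpos hx hxy.le he) (hpos i hi him)
    · have he : 0 ≤ (i : ℝ) - m := by rw [sub_nonneg]; exact_mod_cast him.le
      exact mul_le_mul_of_nonpos_left (Real.rpow_le_rpow (le_of_lt hx) hxy.le he) (hneg i hi him)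
  · have he : (j : ℝ) - m < 0 := by rw [sub_neg]; exact_mod_cast hjm
    exact mul_lt_mul_of_pos_left (Real.rpow_lt_rpow_of_neg hx hxy he) haj

/-- Descartes' rule of signs for a single sign change. -/
lemma eq_of_sum_mul_pow_eq_zero {s : Finset ℕ} {a : ℕ → ℝ} {m : ℕ}
    (hpos : ∀ i ∈ s, i ≤ m → 0 ≤ a i) (hneg : ∀ i ∈ s, m < i → a i ≤ 0)
    {j : ℕ} (hj : j ∈ s) (hjm : j < m) (haj : 0 < a j) {x y : ℝ} (hx : 0 < x) (hy : 0 < y)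
    (hfx : ∑ i ∈ s, a i * x ^ i = 0) (hfy : ∑ i ∈ s, a i * y ^ i = 0) : x = y := by
  rw [sum_mul_pow_eq_rpow_mul_sum a hx m, mul_eq_zero] at hfx
  rw [sum_mul_pow_eq_rpow_mul_sum a hy m, mul_eq_zero] at hfy
  refine (strictAntiOn_sum_mul_rpow_sub hpos hneg hj hjm haj).injOn hx hy ?_
  rw [hfx.resolve_left (Real.rpow_pos_of_pos hx _).ne',
    hfy.resolve_left (Real.rpow_pos_of_pos hy _).ne']

lemma tendsto_sum_mul_pow_atBot {s : Finset ℕ} {a : ℕ → ℝ} {n : ℕ} (hn : n ≠ 0) (hns : n ∈ s)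
    (hle : ∀ i ∈ s, i ≤ n) (han : a n < 0) :
    Tendsto (fun x : ℝ => ∑ i ∈ s, a i * x ^ i) atTop atBot := by
  have hlim : Tendsto (fun x : ℝ => ∑ i ∈ s, a i * x ^ ((i : ℝ) - n)) atTop (𝓝 (a n)) := by
    have hsingle : ∑ i ∈ s, (if i = n then a n else 0) = a n := by simp [hns]
    rw [← hsingle]
    refine tendsto_finsetSum _ fun i hi => ?_
    split_ifs with hin
    · simp only [hin, sub_self, Real.rpow_zero, mul_one, tendsto_const_nhds]
    · have he : 0 < (n : ℝ) - i := by
        rw [sub_pos]; exact_mod_cast lt_of_le_of_ne (hle i hi) hin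
      simpa using (tendsto_rpow_neg_atTop he).const_mul (a i)
  refine (hlim.neg_mul_atTop han (tendsto_pow_atTop hn)).congr' ?_
  filter_upwards [eventually_gt_atTop 0] with x hx
  rw [sum_mul_pow_eq_rpow_mul_sum a hx n, Real.rpow_natCast, mul_comm]

lemma exists_pos_eq_zero_of_tendsto_atBot {f : ℝ → ℝ} (hf : Continuous f) (hf0 : 0 < f 0)
    (hlim : Tendsto f atTop atBot) : ∃ x, 0 < x ∧ f x = 0 := by
  obtain ⟨X, hfX, hX⟩ := ((hlim.eventually (eventually_lt_atBot 0)).and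
    (eventually_gt_atTop 0)).exists
  obtain ⟨x, hx, hfx⟩ := intermediate_value_Ioo' hX.le hf.continuousOn ⟨hfX, hf0⟩
  exact ⟨x, hx.1, hfx⟩

theorem stmt_6_general (n d : ℕ) (hd : 1 ≤ d) (ω : ℝ)
    (hlow : (d : ℝ) < ω * n) (hhigh : ω * n < n) :
    ∃! x : ℝ, 0 < x ∧
      ω * n + ∑ i ∈ Finset.Icc d n, (n.choose i : ℝ) * (ω * n - i) * x ^ i = 0 := by
  set a : ℕ → ℝ := fun i => (n.choose i : ℝ) * (ω * n - i)
  have hsum (x : ℝ) : ω * n + ∑ i ∈ Icc d n, (n.choose i : ℝ) * (ω * n - i) * x ^ i =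
      ∑ i ∈ insert 0 (Icc d n), a i * x ^ i := by
    rw [sum_insert (by simp; omega)]
    simp [a]
  simp only [hsum]
  have hωn : 0 < ω * n := lt_of_le_of_lt (Nat.cast_nonneg d) hlow
  have hf0 : 0 < ∑ i ∈ insert 0 (Icc d n), a i * (0 : ℝ) ^ i := by
    rw [← hsum, sum_eq_zero fun i hi => by rw [zero_pow (by simp at hi; omega), mul_zero], add_zero]
    exact hωn
  have han : a n < 0 := by simpa [a] using hhigh
  have hdn' : d < n := by exact_mod_cast hlow.trans hhigh
  obtain ⟨x, hx, hfx⟩ := exists_pos_eq_zero_of_tendsto_atBot (by fun_prop) hf0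
    (tendsto_sum_mul_pow_atBot (by omega) (by simp; omega) (by simp) han)
  have hdm : d ≤ ⌊ω * n⌋₊ := Nat.le_floor hlow.le
  have hpos : ∀ i ∈ insert 0 (Icc d n), i ≤ ⌊ω * n⌋₊ → 0 ≤ a i := fun i _ hi =>
    mul_nonneg (Nat.cast_nonneg _) (sub_nonneg.2 ((Nat.le_floor_iff hωn.le).1 hi))
  have hneg : ∀ i ∈ insert 0 (Icc d n), ⌊ω * n⌋₊ < i → a i ≤ 0 := fun i _ hi =>
    mul_nonpos_of_nonneg_of_nonpos (Nat.cast_nonneg _)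
      (sub_nonpos.2 ((Nat.floor_lt hωn.le).1 hi).le)
  refine ⟨x, ⟨hx, hfx⟩, fun y ⟨hy, hfy⟩ => eq_of_sum_mul_pow_eq_zero hpos hneg
    (mem_insert_self 0 _) (by omega) (by simpa [a] using hωn) hy hx hfy hfx⟩

theorem stmt_6 (n d : ℕ) (hd : 1 ≤ d) (hdn : d ≤ n) (ω : ℝ) (hω0 : 0 < ω) (hω1 : ω < 1)
    (hlow : (d : ℝ) < ω * n) (hhigh : ω * n < n) :
    ∃! x : ℝ, 0 < x ∧
      ω * n + ∑ i ∈ Finset.Icc d n, (n.choose i : ℝ) * (ω * n - i) * x ^ i = 0 :=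
  stmt_6_general n d hd ω hlow hhigh
end

section
/- Let t ≥ 2 and let φ(β₁,…,β_t) = (Π_i β_i)·h(ω / Π_i β_i) - (1-R₁)·Σ_i β_i be defined on the domain D = {β ∈ (0,1]^t : Π_i β_i > ω}, where 0 < ω < 1 and 0 ≤ R₁ < 1 and h is the binary entropy (base 2). Then φ is strictly concave on D. -/
open Real Finset Set

theorem ConcaveOn.comp_strictConcaveOn_of_mapsTo {E : Type*} [AddCommGroup E] [Module ℝ E]
    {s : Set E} {t : Set ℝ} {f : E → ℝ} {g : ℝ → ℝ} (hg : ConcaveOn ℝ t g)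
    (hf : StrictConcaveOn ℝ s f) (hst : MapsTo f s t) (hg' : StrictMonoOn g t) :
    StrictConcaveOn ℝ s (g ∘ f) :=
  ⟨hf.1, fun _ hx _ hy hxy _ _ ha hb hab =>
    (hg.2 (hst hx) (hst hy) ha.le hb.le hab).trans_lt <|
      hg' (hg.1 (hst hx) (hst hy) ha.le hb.le hab) (hst (hf.1 hx hy ha.le hb.le hab))
        (hf.2 hx hy hxy ha hb hab)⟩

theorem strictConcaveOn_sum_log {ι : Type*} [Fintype ι] :
    StrictConcaveOn ℝ {x : ι → ℝ | ∀ i, 0 < x i} fun x => ∑ i, log (x i) := by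
  refine ⟨fun x hx y hy a b ha hb hab i => ?_, fun x hx y hy hxy a b ha hb hab => ?_⟩
  · exact convex_Ioi (0 : ℝ) (hx i) (hy i) ha hb hab
  · obtain ⟨j, hj⟩ := Function.ne_iff.mp hxy
    simp only [smul_eq_mul, Pi.add_apply, Pi.smul_apply, mul_sum, ← sum_add_distrib]
    refine sum_lt_sum (fun i _ => ?_) ⟨j, mem_univ j, ?_⟩
    · exact strictConcaveOn_log_Ioi.concaveOn.2 (hx i) (hy i) ha.le hb.le hab
    · exact strictConcaveOn_log_Ioi.2 (hx j) (hy j) hj ha hb hab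

/-- `u ↦ Q * binEnt (ω / Q)` at `Q = exp u`, written out for `ω < Q`. -/
noncomputable def entropyPotential (ω u : ℝ) : ℝ :=
  (exp u * u - (exp u - ω) * log (exp u - ω) - ω * log ω) / log 2

theorem mul_binEnt_div_eq_entropyPotential {ω Q : ℝ} (hω : 0 < ω) (hQ : ω < Q) :
    Q * binEnt (ω / Q) = entropyPotential ω (log Q) := by
  have hQ₀ : 0 < Q := hω.trans hQ
  have hQω : 0 < Q - ω := sub_pos.mpr hQ
  have hsub : 1 - ω / Q = (Q - ω) / Q := by field_simp
  rw [binEnt, entropyPotential, exp_log hQ₀, hsub, logb, logb, log_div hω.ne' hQ₀.ne',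
    log_div hQω.ne' hQ₀.ne']
  field_simp
  ring

section entropyPotential

variable {ω u : ℝ}

theorem exp_sub_pos_of_log_lt (hω : 0 < ω) (hu : log ω < u) : 0 < exp u - ω :=
  sub_pos.mpr ((log_lt_iff_lt_exp hω).mp hu)

theorem hasDerivAt_entropyPotential (hω : 0 < ω) (hu : log ω < u) :
    HasDerivAt (entropyPotential ω) (exp u * (u - log (exp u - ω)) / log 2) u := by
  have hQω := exp_sub_pos_of_log_lt hω hu
  refine (((((hasDerivAt_exp u).mul (hasDerivAt_id' u)).sub
    (((hasDerivAt_exp u).sub_const ω).mul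
      (((hasDerivAt_exp u).sub_const ω).log hQω.ne'))).sub_const (ω * log ω)).div_const
        (log 2)).congr_deriv ?_
  field_simp
  ring

theorem hasDerivAt_deriv_entropyPotential (hω : 0 < ω) (hu : log ω < u) :
    HasDerivAt (fun u => exp u * (u - log (exp u - ω)) / log 2)
      (exp u * (u - log (exp u - ω) - ω / (exp u - ω)) / log 2) u := by
  have hQω := exp_sub_pos_of_log_lt hω hu
  refine (((hasDerivAt_exp u).mul ((hasDerivAt_id' u).sub
    (((hasDerivAt_exp u).sub_const ω).log hQω.ne'))).div_const (log 2)).congr_deriv ?_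
  simp only [Pi.sub_apply]
  field_simp
  ring

theorem sub_log_exp_sub_pos (hω : 0 < ω) (hu : log ω < u) : 0 < u - log (exp u - ω) := by
  have hQω := exp_sub_pos_of_log_lt hω hu
  have hlog := log_lt_log hQω (sub_lt_self (exp u) hω)
  rw [log_exp] at hlog
  linarith

/-- `log (Q / (Q - ω)) < Q / (Q - ω) - 1` at `Q = exp u`. -/
theorem sub_log_exp_sub_lt (hω : 0 < ω) (hu : log ω < u) :
    u - log (exp u - ω) < ω / (exp u - ω) := by
  have hQω := exp_sub_pos_of_log_lt hω hu
  have hratio : 1 < exp u / (exp u - ω) := (one_lt_div hQω).mpr (sub_lt_self _ hω)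
  have h := log_lt_sub_one_of_pos (zero_lt_one.trans hratio) hratio.ne'
  rwa [log_div (exp_pos u).ne' hQω.ne', log_exp, div_sub_one hQω.ne', sub_sub_cancel] at h

theorem concaveOn_entropyPotential (hω : 0 < ω) :
    ConcaveOn ℝ (Ioi (log ω)) (entropyPotential ω) := by
  refine concaveOn_of_hasDerivWithinAt2_nonpos (convex_Ioi _)
    (f' := fun u => exp u * (u - log (exp u - ω)) / log 2)
    (f'' := fun u => exp u * (u - log (exp u - ω) - ω / (exp u - ω)) / log 2)
    (fun u hu => (hasDerivAt_entropyPotential hω hu).continuousAt.continuousWithinAt)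
    (fun u hu => ?_) (fun u hu => ?_) (fun u hu => ?_) <;> simp only [interior_Ioi] at hu ⊢
  · exact (hasDerivAt_entropyPotential hω hu).hasDerivWithinAt
  · exact (hasDerivAt_deriv_entropyPotential hω hu).hasDerivWithinAt
  · have hneg : u - log (exp u - ω) - ω / (exp u - ω) ≤ 0 := by
      linarith [sub_log_exp_sub_lt hω hu]
    exact div_nonpos_of_nonpos_of_nonneg (mul_nonpos_of_nonneg_of_nonpos (exp_pos u).le hneg)
      (log_pos one_lt_two).le

theorem strictMonoOn_entropyPotential (hω : 0 < ω) :
    StrictMonoOn (entropyPotential ω) (Ioi (log ω)) := by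
  refine strictMonoOn_of_hasDerivWithinAt_pos (convex_Ioi _)
    (f' := fun u => exp u * (u - log (exp u - ω)) / log 2)
    (fun u hu => (hasDerivAt_entropyPotential hω hu).continuousAt.continuousWithinAt)
    (fun u hu => ?_) (fun u hu => ?_) <;> simp only [interior_Ioi] at hu ⊢
  · exact (hasDerivAt_entropyPotential hω hu).hasDerivWithinAt
  · exact div_pos (mul_pos (exp_pos u) (sub_log_exp_sub_pos hω hu)) (log_pos one_lt_two)

end entropyPotential

theorem stmt_11_general (t : ℕ) (ω R₁ : ℝ)
    (hω0 : 0 < ω) :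
    StrictConcaveOn ℝ
      {β : Fin t → ℝ | (∀ i, 0 < β i ∧ β i ≤ 1) ∧ ω < ∏ i, β i}
      (fun β => (∏ i, β i) * binEnt (ω / ∏ i, β i) - (1 - R₁) * ∑ i, β i) := by
  set D := {β : Fin t → ℝ | (∀ i, 0 < β i ∧ β i ≤ 1) ∧ ω < ∏ i, β i}
  set B := {β : Fin t → ℝ | ∀ i, 0 < β i ∧ β i ≤ 1}
  set L := fun β : Fin t → ℝ => ∑ i, log (β i)
  have hB : Convex ℝ B := fun x hx y hy a b ha hb hab i =>
    convex_Ioc (0 : ℝ) 1 (hx i) (hy i) ha hb hab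
  have hLB : StrictConcaveOn ℝ B L :=
    strictConcaveOn_sum_log.subset (fun β hβ i => (hβ i).1) hB
  have hD : D = {β ∈ B | log ω < L β} := by
    ext β
    refine and_congr_right fun hβ => ?_
    rw [← log_lt_log_iff hω0 (prod_pos fun i _ => (hβ i).1), log_prod fun i _ => (hβ i).1.ne']
  have hL : StrictConcaveOn ℝ D L :=
    hLB.subset (hD.subset.trans (sep_subset _ _)) (hD ▸ hLB.convex_gt _)
  have hψL := (concaveOn_entropyPotential hω0).comp_strictConcaveOn_of_mapsTo hL
    (fun β hβ => (hD.subset hβ).2) (strictMonoOn_entropyPotential hω0)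
  have hlin : ConvexOn ℝ D fun β => (1 - R₁) * ∑ i, β i :=
    ⟨hL.1, fun x _ y _ a b _ _ _ => le_of_eq <| by
      simp only [smul_eq_mul, Pi.add_apply, Pi.smul_apply, sum_add_distrib, ← mul_sum]; ring⟩
  refine (hψL.sub_convexOn hlin).congr fun β hβ => ?_
  simp only [Pi.sub_apply, Function.comp_apply, L]
  rw [mul_binEnt_div_eq_entropyPotential hω0 hβ.2, log_prod fun i _ => (hβ.1 i).1.ne']

theorem stmt_11 (t : ℕ) (ht : 2 ≤ t) (ω R₁ : ℝ)
    (hω0 : 0 < ω) (hω1 : ω < 1) (hR0 : 0 ≤ R₁) (hR1 : R₁ < 1) :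
    StrictConcaveOn ℝ
      {β : Fin t → ℝ | (∀ i, 0 < β i ∧ β i ≤ 1) ∧ ω < ∏ i, β i}
      (fun β => (∏ i, β i) * binEnt (ω / ∏ i, β i) - (1 - R₁) * ∑ i, β i) :=
  stmt_11_general t ω R₁ hω0
end

section
/- Suppose the i-th threshold-decoding subprocedure with threshold θ = d₁/κ (κ ≥ 2) introduces more errors than it removes. Then with μ_i = |E(N_i)| / (|E(N_i)| + |E(B_i)|), the number of removed errors satisfies |E(G_i)| ≤ ((1-μ_i)/(κ-μ_i))·|E|; in particular |E(G_i)| ≤ |E|/κ. -/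
/-! Since each wrongly decoded vertex contributes at most `d₁/κ` introduced errors but at least
`(κ-1)d₁/κ` edges of `E(B_i)`, the hypothesis gives `(κ-1)|E(G_i)| ≤ |E(B_i)| = (1-μ_i)(|E| - |E(G_i)|)`,
which rearranges to both bounds. -/

lemma sub_one_mul_le_of_le_mul_div {κ d e b f : ℝ} (hκ : 1 ≤ κ) (he : e ≤ b * (d / κ))
    (hf : b * ((κ - 1) * d / κ) ≤ f) : (κ - 1) * e ≤ f :=
  calc (κ - 1) * e ≤ (κ - 1) * (b * (d / κ)) := mul_le_mul_of_nonneg_left he (by linarith)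
    _ = b * ((κ - 1) * d / κ) := by ring
    _ ≤ f := hf

lemma le_div_of_sub_one_mul_le {κ eg en eb : ℝ} (hκ : 0 < κ) (hen : 0 ≤ en)
    (h : (κ - 1) * eg ≤ eb) : eg ≤ (eg + en + eb) / κ := by
  rw [le_div_iff₀ hκ]
  linarith

lemma le_one_sub_div_mul_of_sub_one_mul_le {κ eg en eb : ℝ} (hκ : 1 < κ) (heb : 0 ≤ eb)
    (hpos : 0 < en + eb) (h : (κ - 1) * eg ≤ eb) :
    eg ≤ ((1 - en / (en + eb)) / (κ - en / (en + eb))) * (eg + en + eb) := by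
  set μ := en / (en + eb)
  have hμ_le : μ ≤ 1 := (div_le_one hpos).2 (by linarith)
  have hμ_mul : (1 - μ) * (en + eb) = eb := by
    rw [sub_mul, div_mul_cancel₀ en hpos.ne']
    ring
  rw [div_mul_eq_mul_div, le_div_iff₀ (by linarith)]
  linear_combination h - hμ_mul

theorem stmt_15_general (κ d₁ eg en eb b : ℝ) (hκ : 2 ≤ κ)
    (hen : 0 ≤ en) (heb : 0 ≤ eb)
    (hpos : 0 < en + eb)
    -- the subprocedure introduces at least `eg` errors (more than it removes),
    -- and introduces at most `d₁/κ` errors at each of the `b` badly decoded vertices: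
    (hintro : eg ≤ b * (d₁ / κ))
    -- each badly decoded vertex has `E`-degree at least `(κ-1)d₁/κ`:
    (hB : b * ((κ - 1) * d₁ / κ) ≤ eb) :
    eg ≤ ((1 - en / (en + eb)) / (κ - en / (en + eb))) * (eg + en + eb) ∧
      eg ≤ (eg + en + eb) / κ := by
  have key := sub_one_mul_le_of_le_mul_div (by linarith) hintro hB
  exact ⟨le_one_sub_div_mul_of_sub_one_mul_le (by linarith) heb hpos key,
    le_div_of_sub_one_mul_le (by linarith) hen key⟩

theorem stmt_15 (κ d₁ eg en eb b : ℝ) (hκ : 2 ≤ κ) (hd : 0 < d₁)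
    (hb : 0 ≤ b) (heg : 0 ≤ eg) (hen : 0 ≤ en) (heb : 0 ≤ eb)
    (hpos : 0 < en + eb)
    -- the subprocedure introduces at least `eg` errors (more than it removes),
    -- and introduces at most `d₁/κ` errors at each of the `b` badly decoded vertices:
    (hintro : eg ≤ b * (d₁ / κ))
    -- each badly decoded vertex has `E`-degree at least `(κ-1)d₁/κ`:
    (hB : b * ((κ - 1) * d₁ / κ) ≤ eb) :
    eg ≤ ((1 - en / (en + eb)) / (κ - en / (en + eb))) * (eg + en + eb) ∧
      eg ≤ (eg + en + eb) / κ :=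
  stmt_15_general κ d₁ eg en eb b hκ hen heb hpos hintro hB
end
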